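/- arXiv:1604.04876 — 7 statements merged into one kernel-verified Lean document; each statement's English description precedes it below -/
import Mathlib

section
/- Let s and b be independent nonnegative integrable real-valued random variables, and let M be a median of s satisfying P(s ≤ M) = 1/2 and P(s < M) = 1/2. Then the expected welfare of the fixed-price mechanism with price M is at least half the optimal efficiency: E[s + (b − s)·𝟙{s ≤ M ∧ M ≤ b}] ≥ (1/2)·E[max(s, b)]. -/
/-!
Splitting the gains from trade at the price `M` and using independence, the expected welfare is
`E[s] + P(s ≤ M)·E[(b - M)⁺] + E[(M - s)⁺·1{M ≤ b}] ≥ E[s] + E[(b - M)⁺] / 2`, while pointwise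
`max s b ≤ s + (b - M)⁺ + (M - s)⁺`. It therefore suffices that `E[(M - s)⁺] ≤ E[s]`, and indeed
`E[(M - s)⁺] ≤ M·P(s ≤ M) ≤ M·P(M ≤ s) ≤ E[s]` because `M` is a median of the nonnegative `s`.
-/

open MeasureTheory ProbabilityTheory

section Pointwise

variable (s b M : ℝ)

lemma max_le_add_posPart_sub_add_posPart_sub : max s b ≤ s + (b - M)⁺ + (M - s)⁺ := by
  have := le_posPart (b - M)
  have := le_posPart (M - s)
  have := posPart_nonneg (b - M)
  have := posPart_nonneg (M - s)
  rcases le_total b s with h | h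
  · rw [max_eq_left h]; linarith
  · rw [max_eq_right h]; linarith

lemma sub_mul_ite_eq_ite_mul_posPart_add_posPart_mul_ite :
    (b - s) * (if s ≤ M ∧ M ≤ b then 1 else 0)
      = (if s ≤ M then 1 else 0) * (b - M)⁺ + (M - s)⁺ * (if M ≤ b then 1 else 0) := by
  by_cases hs : s ≤ M <;> by_cases hb : M ≤ b
  · simp [hs, hb]
  · simp [hs, hb, posPart_eq_zero.2 (sub_nonpos.2 (le_of_not_ge hb))]
  · simp [hs, hb, posPart_eq_zero.2 (sub_nonpos.2 (le_of_not_ge hs))]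
  · simp [hs, hb]

variable {s}

lemma posPart_sub_le_mul_ite (hs : 0 ≤ s) : (M - s)⁺ ≤ M * (if s ≤ M then 1 else 0) := by
  split_ifs with h
  · rw [mul_one, posPart_eq_self.2 (sub_nonneg.2 h)]; linarith
  · rw [mul_zero, posPart_eq_zero.2 (sub_nonpos.2 (le_of_not_ge h))]

lemma norm_ite_one_zero_le (q : Prop) [Decidable q] : ‖if q then (1 : ℝ) else 0‖ ≤ 1 := by
  split_ifs <;> simp

end Pointwise

section Integral

variable {Ω : Type*} [MeasurableSpace Ω] {P : Measure Ω} {X s b : Ω → ℝ}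

lemma integral_ite_le_eq_measureReal (hX : AEMeasurable X P) (M : ℝ) :
    ∫ ω, (if X ω ≤ M then (1 : ℝ) else 0) ∂P = P.real {ω | X ω ≤ M} := by
  have hS : NullMeasurableSet {ω | X ω ≤ M} P := hX.nullMeasurable measurableSet_Iic
  simpa [Set.indicator_apply] using integral_indicator₀ (f := fun _ => (1 : ℝ)) hS

lemma ProbabilityTheory.IndepFun.integral_ite_le_mul_posPart_sub (hindep : IndepFun s b P)
    (hs : AEMeasurable s P) (hb : AEMeasurable b P) (M : ℝ) :
    ∫ ω, (if s ω ≤ M then 1 else 0) * (b ω - M)⁺ ∂P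
      = P.real {ω | s ω ≤ M} * ∫ ω, (b ω - M)⁺ ∂P := by
  rw [← integral_ite_le_eq_measureReal hs]
  exact hindep.integral_fun_comp_mul_comp (f := fun x => if x ≤ M then 1 else 0)
    (g := fun y => (y - M)⁺) hs hb
    (Measurable.ite measurableSet_Iic measurable_const measurable_const).aestronglyMeasurable
    (by fun_prop)

lemma measureReal_le_le_measureReal_ge_of_le_half [IsProbabilityMeasure P]
    (hX : AEMeasurable X P) {M : ℝ} (hM : P.real {ω | X ω ≤ M} ≤ 1 / 2) :
    P.real {ω | X ω ≤ M} ≤ P.real {ω | M ≤ X ω} := by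
  have hlt : P.real {ω | X ω < M} ≤ P.real {ω | X ω ≤ M} :=
    measureReal_mono fun ω (h : X ω < M) => h.le
  have hcompl : {ω | M ≤ X ω} = {ω | X ω < M}ᶜ := by ext; simp
  have hlt_meas : NullMeasurableSet {ω | X ω < M} P := hX.nullMeasurable measurableSet_Iio
  rw [hcompl, measureReal_compl₀ hlt_meas, probReal_univ]
  linarith

variable [IsFiniteMeasure P]

lemma integrable_ite_comp {p : ℝ → Prop} [DecidablePred p] (hX : AEMeasurable X P)
    (hp : MeasurableSet {x | p x}) : Integrable (fun ω => if p (X ω) then (1 : ℝ) else 0) P :=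
  .of_bound ((Measurable.ite hp measurable_const measurable_const).comp_aemeasurable hX
    |>.aestronglyMeasurable) 1 (.of_forall fun _ => norm_ite_one_zero_le _)

lemma integral_posPart_sub_le_integral (hs0 : ∀ ω, 0 ≤ s ω) (hs : Integrable s P) {M : ℝ}
    (hM0 : 0 ≤ M) (hM : P.real {ω | s ω ≤ M} ≤ P.real {ω | M ≤ s ω}) :
    ∫ ω, (M - s ω)⁺ ∂P ≤ ∫ ω, s ω ∂P :=
  calc ∫ ω, (M - s ω)⁺ ∂P ≤ ∫ ω, M * (if s ω ≤ M then 1 else 0) ∂P :=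
        integral_mono ((integrable_const M).sub hs).pos_part
          ((integrable_ite_comp hs.aemeasurable measurableSet_Iic).const_mul M)
          fun ω => posPart_sub_le_mul_ite M (hs0 ω)
    _ = M * P.real {ω | s ω ≤ M} := by
        rw [integral_const_mul, integral_ite_le_eq_measureReal hs.aemeasurable]
    _ ≤ M * P.real {ω | M ≤ s ω} := by gcongr
    _ ≤ ∫ ω, s ω ∂P := mul_meas_ge_le_integral_of_nonneg (.of_forall hs0) hs M

lemma integral_max_le_add_integral_posPart_sub (hs : Integrable s P) (hb : Integrable b P)
    (M : ℝ) :
    ∫ ω, max (s ω) (b ω) ∂P ≤ ∫ ω, s ω ∂P + ∫ ω, (b ω - M)⁺ ∂P + ∫ ω, (M - s ω)⁺ ∂P := by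
  have hbuyer : Integrable (fun ω => (b ω - M)⁺) P := (hb.sub (integrable_const M)).pos_part
  have hseller : Integrable (fun ω => (M - s ω)⁺) P := ((integrable_const M).sub hs).pos_part
  calc ∫ ω, max (s ω) (b ω) ∂P ≤ ∫ ω, (s ω + (b ω - M)⁺ + (M - s ω)⁺) ∂P :=
        integral_mono (hs.sup hb) ((hs.fun_add hbuyer).fun_add hseller)
          fun ω => max_le_add_posPart_sub_add_posPart_sub _ _ M
    _ = _ := by rw [integral_add (hs.fun_add hbuyer) hseller, integral_add hs hbuyer]

lemma ProbabilityTheory.IndepFun.integral_fixed_price_welfare_eq (hindep : IndepFun s b P)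
    (hs : Integrable s P) (hb : Integrable b P) (M : ℝ) :
    ∫ ω, (s ω + (b ω - s ω) * (if s ω ≤ M ∧ M ≤ b ω then 1 else 0)) ∂P
      = ∫ ω, s ω ∂P + P.real {ω | s ω ≤ M} * ∫ ω, (b ω - M)⁺ ∂P
        + ∫ ω, (M - s ω)⁺ * (if M ≤ b ω then 1 else 0) ∂P := by
  have hbuyer : Integrable (fun ω => (if s ω ≤ M then 1 else 0) * (b ω - M)⁺) P :=
    (hb.sub (integrable_const M)).pos_part.bdd_mul
      (integrable_ite_comp hs.aemeasurable measurableSet_Iic).aestronglyMeasurable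
      (.of_forall fun _ => norm_ite_one_zero_le _)
  have hseller : Integrable (fun ω => (M - s ω)⁺ * (if M ≤ b ω then 1 else 0)) P :=
    ((integrable_const M).sub hs).pos_part.mul_bdd
      (integrable_ite_comp hb.aemeasurable measurableSet_Ici).aestronglyMeasurable
      (.of_forall fun _ => norm_ite_one_zero_le _)
  simp_rw [sub_mul_ite_eq_ite_mul_posPart_add_posPart_mul_ite]
  rw [integral_add hs (hbuyer.fun_add hseller), integral_add hbuyer hseller,
    hindep.integral_ite_le_mul_posPart_sub hs.aemeasurable hb.aemeasurable, add_assoc]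

end Integral

theorem median_mechanism_half_of_optimal_general
    {Ω : Type*} [MeasurableSpace Ω] {P : Measure Ω} [IsProbabilityMeasure P]
    (s b : Ω → ℝ)
    (hindep : IndepFun s b P)
    (hs0 : ∀ ω, 0 ≤ s ω)
    (hsi : Integrable s P) (hbi : Integrable b P)
    (M : ℝ)
    (hM1 : P {ω | s ω ≤ M} = 1/2) :
    ∫ ω, (s ω + (b ω - s ω) * (if s ω ≤ M ∧ M ≤ b ω then (1:ℝ) else 0)) ∂P
      ≥ (1/2) * ∫ ω, max (s ω) (b ω) ∂P := by
  have hM : P.real {ω | s ω ≤ M} = 1 / 2 := by simp [measureReal_def, hM1]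
  have hM0 : 0 ≤ M := by
    obtain ⟨ω, hω⟩ := nonempty_of_measure_ne_zero (show P {ω | s ω ≤ M} ≠ 0 by simp [hM1])
    exact (hs0 ω).trans hω
  have hseller := integral_posPart_sub_le_integral hs0 hsi hM0
    (measureReal_le_le_measureReal_ge_of_le_half hsi.aemeasurable hM.le)
  have hopt := integral_max_le_add_integral_posPart_sub hsi hbi M
  have htrade_nonneg : 0 ≤ ∫ ω, (M - s ω)⁺ * (if M ≤ b ω then 1 else 0) ∂P :=
    integral_nonneg fun ω => by positivity
  rw [hindep.integral_fixed_price_welfare_eq hsi hbi M, hM]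
  linarith

/-- **Median mechanism guarantees half of the optimal efficiency.**
If `s` and `b` are independent nonnegative integrable random variables and `M`
is a median of `s` (with `P(s ≤ M) = P(s < M) = 1/2`), then the fixed-price
mechanism with price `M` (trading iff `s ≤ M ≤ b`) achieves expected welfare
at least half of `E[max(s, b)]`. -/
theorem median_mechanism_half_of_optimal
    {Ω : Type*} [MeasurableSpace Ω] {P : Measure Ω} [IsProbabilityMeasure P]
    (s b : Ω → ℝ) (hsm : Measurable s) (hbm : Measurable b)
    (hindep : IndepFun s b P)
    (hs0 : ∀ ω, 0 ≤ s ω) (hb0 : ∀ ω, 0 ≤ b ω)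
    (hsi : Integrable s P) (hbi : Integrable b P)
    (M : ℝ)
    (hM1 : P {ω | s ω ≤ M} = 1/2)
    (hM2 : P {ω | s ω < M} = 1/2) :
    ∫ ω, (s ω + (b ω - s ω) * (if s ω ≤ M ∧ M ≤ b ω then (1:ℝ) else 0)) ∂P
      ≥ (1/2) * ∫ ω, max (s ω) (b ω) ∂P :=
  median_mechanism_half_of_optimal_general s b hindep hs0 hsi hbi M hM1
end

section
/- Let s and b be independent nonnegative integrable real-valued random variables with E[b] > 0, and let W be a real number satisfying E[b·𝟙{b < W}] = E[b·𝟙{b ≥ W}] (so each side equals E[b]/2). Then the expected welfare of the fixed-price mechanism with price W is at least half the optimal efficiency: E[s + (b − s)·𝟙{s ≤ W ∧ W ≤ b}] ≥ (1/2)·E[max(s, b)]. -/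
/-!
Put `c = E[b·𝟙{b ≥ W}] = E[b·𝟙{b < W}]`; then `c ≤ max W 0`. A four-case check shows that for all
seller and buyer values `x, y ≥ 0`
```
max x y + 𝟙{x ≤ W}·(y𝟙{y ≥ W} − y𝟙{y < W}) − 𝟙{x > W}·(y𝟙{y ≥ W} − c)
  ≤ 2·(x + (y − x)·𝟙{x ≤ W ≤ y}).
```
Each correction term is a function of the seller's value times a centred function of the buyer's
value, so under independence both have expectation zero, and taking expectations gives
`E[max(s, b)] ≤ 2·E[s + (b − s)·𝟙{s ≤ W ≤ b}]`.
-/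

open MeasureTheory ProbabilityTheory

noncomputable def fixedPriceWelfare (p x y : ℝ) : ℝ :=
  x + (y - x) * if x ≤ p ∧ p ≤ y then 1 else 0

noncomputable def medianCorrection (p c x y : ℝ) : ℝ :=
  (y * (if p ≤ y then 1 else 0) - y * (if y < p then 1 else 0)) * (if x ≤ p then 1 else 0) -
    (y * (if p ≤ y then 1 else 0) - c) * (if p < x then 1 else 0)

theorem max_add_medianCorrection_le_two_mul_fixedPriceWelfare {p c x y : ℝ} (hx : 0 ≤ x)
    (hy : 0 ≤ y) (hc : c ≤ max p 0) :
    max x y + medianCorrection p c x y ≤ 2 * fixedPriceWelfare p x y := by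
  have hmax : max x y ≤ x + y := max_le (by linarith) (by linarith)
  have hcx : p < x → c ≤ x := fun hpx => hc.trans (max_le hpx.le hx)
  unfold fixedPriceWelfare medianCorrection
  rcases le_or_gt x p with hxp | hpx <;> rcases le_or_gt p y with hpy | hyp
  · simp only [hxp, hpy, not_lt.2 hpy, not_lt.2 hxp, and_self, if_true, if_false]
    linarith [max_eq_right (hxp.trans hpy)]
  · simp only [hxp, hyp, not_le.2 hyp, not_lt.2 hxp, and_false, if_true, if_false]
    linarith
  · simp only [not_le.2 hpx, hpx, hpy, false_and, if_true, if_false]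
    linarith [hcx hpx]
  · simp only [not_le.2 hpx, hpx, hyp, not_le.2 hyp, false_and, if_true, if_false]
    linarith [max_eq_left (hyp.trans hpx).le, hcx hpx]

section

variable {Ω : Type*} [MeasurableSpace Ω] {P : Measure Ω}

theorem ProbabilityTheory.IndepFun.integral_comp_mul_comp_eq_zero {α β : Type*}
    [MeasurableSpace α] [MeasurableSpace β] {X : Ω → α} {Y : Ω → β} (hXY : IndepFun X Y P)
    (hX : AEMeasurable X P) (hY : AEMeasurable Y P) {f : α → ℝ} {g : β → ℝ} (hf : Measurable f)
    (hg : Measurable g) (hf₀ : ∫ ω, f (X ω) ∂P = 0) :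
    ∫ ω, f (X ω) * g (Y ω) ∂P = 0 := by
  have h := (hXY.comp hf hg).integral_fun_mul_eq_mul_integral
    (hf.comp_aemeasurable hX).aestronglyMeasurable (hg.comp_aemeasurable hY).aestronglyMeasurable
  simp only [Function.comp_apply] at h
  rw [h, hf₀, zero_mul]

theorem MeasureTheory.Integrable.mul_ite_one_zero {f : Ω → ℝ} (hf : Integrable f P)
    {p : Ω → Prop} [DecidablePred p] (hp : MeasurableSet {ω | p ω}) :
    Integrable (fun ω => f ω * if p ω then 1 else 0) P := by
  refine (hf.indicator hp).congr (ae_of_all _ fun ω => ?_)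
  by_cases h : p ω <;> simp [h]

theorem integral_mul_ite_lt_le_max [IsProbabilityMeasure P] {b : Ω → ℝ} (hb : Integrable b P)
    (hbm : Measurable b) (p : ℝ) :
    ∫ ω, b ω * (if b ω < p then 1 else 0) ∂P ≤ max p 0 := by
  calc ∫ ω, b ω * (if b ω < p then 1 else 0) ∂P ≤ ∫ _, max p 0 ∂P := by
        refine integral_mono (hb.mul_ite_one_zero (measurableSet_lt hbm measurable_const))
          (integrable_const _) fun ω => ?_
        by_cases h : b ω < p
        · simp only [h, if_true, mul_one]
          exact h.le.trans (le_max_left p 0)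
        · simp only [h, if_false, mul_zero]
          exact le_max_right p 0
    _ = max p 0 := by simp

variable {s b : Ω → ℝ}

theorem integrable_fixedPriceWelfare (hsm : Measurable s) (hbm : Measurable b)
    (hsi : Integrable s P) (hbi : Integrable b P) (p : ℝ) :
    Integrable (fun ω => fixedPriceWelfare p (s ω) (b ω)) P :=
  hsi.add ((hbi.sub hsi).mul_ite_one_zero
    ((measurableSet_le hsm measurable_const).inter (measurableSet_le measurable_const hbm)))

theorem integrable_medianCorrection [IsFiniteMeasure P] (hsm : Measurable s)
    (hbm : Measurable b) (hbi : Integrable b P) (p c : ℝ) :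
    Integrable (fun ω => medianCorrection p c (s ω) (b ω)) P := by
  have hge := hbi.mul_ite_one_zero (measurableSet_le measurable_const hbm) (p := fun ω => p ≤ b ω)
  have hlt := hbi.mul_ite_one_zero (measurableSet_lt hbm measurable_const) (p := fun ω => b ω < p)
  exact ((hge.sub hlt).mul_ite_one_zero (measurableSet_le hsm measurable_const)).sub
    ((hge.sub (integrable_const c)).mul_ite_one_zero (measurableSet_lt measurable_const hsm))

theorem integral_medianCorrection_eq_zero [IsProbabilityMeasure P] (hsm : Measurable s)
    (hbm : Measurable b) (hindep : IndepFun s b P) (hbi : Integrable b P) {p : ℝ}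
    (hp : ∫ ω, b ω * (if b ω < p then 1 else 0) ∂P = ∫ ω, b ω * (if p ≤ b ω then 1 else 0) ∂P) :
    ∫ ω, medianCorrection p (∫ ω, b ω * (if p ≤ b ω then 1 else 0) ∂P) (s ω) (b ω) ∂P = 0 := by
  set c := ∫ ω, b ω * (if p ≤ b ω then 1 else 0) ∂P
  have hge := hbi.mul_ite_one_zero (measurableSet_le measurable_const hbm) (p := fun ω => p ≤ b ω)
  have hlt := hbi.mul_ite_one_zero (measurableSet_lt hbm measurable_const) (p := fun ω => b ω < p)
  have hmge : Measurable fun y : ℝ => y * if p ≤ y then 1 else 0 :=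
    measurable_id.mul (measurable_const.ite measurableSet_Ici measurable_const)
  have hmlt : Measurable fun y : ℝ => y * if y < p then 1 else 0 :=
    measurable_id.mul (measurable_const.ite measurableSet_Iio measurable_const)
  have hlower := hindep.symm.integral_comp_mul_comp_eq_zero hbm.aemeasurable hsm.aemeasurable
    (f := fun y => y * (if p ≤ y then 1 else 0) - y * (if y < p then 1 else 0))
    (g := fun x => if x ≤ p then 1 else 0)
    (hmge.sub hmlt) (measurable_const.ite measurableSet_Iic measurable_const)
    (by rw [integral_sub hge hlt, hp, sub_self])
  have hupper := hindep.symm.integral_comp_mul_comp_eq_zero hbm.aemeasurable hsm.aemeasurable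
    (f := fun y => y * (if p ≤ y then 1 else 0) - c) (g := fun x => if p < x then 1 else 0)
    (hmge.sub measurable_const) (measurable_const.ite measurableSet_Ioi measurable_const)
    (by rw [integral_sub hge (integrable_const c)]; simp [c])
  unfold medianCorrection
  rw [integral_sub, hlower, hupper, sub_zero]
  · exact (hge.sub hlt).mul_ite_one_zero (measurableSet_le hsm measurable_const)
  · exact (hge.sub (integrable_const c)).mul_ite_one_zero (measurableSet_lt measurable_const hsm)

end

theorem weighted_median_mechanism_half_of_optimal_general
    {Ω : Type*} [MeasurableSpace Ω] {P : Measure Ω} [IsProbabilityMeasure P]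
    (s b : Ω → ℝ) (hsm : Measurable s) (hbm : Measurable b)
    (hindep : IndepFun s b P)
    (hs0 : ∀ ω, 0 ≤ s ω) (hb0 : ∀ ω, 0 ≤ b ω)
    (hsi : Integrable s P) (hbi : Integrable b P)
    (W : ℝ)
    (hW : ∫ ω, b ω * (if b ω < W then (1:ℝ) else 0) ∂P
        = ∫ ω, b ω * (if W ≤ b ω then (1:ℝ) else 0) ∂P) :
    ∫ ω, (s ω + (b ω - s ω) * (if s ω ≤ W ∧ W ≤ b ω then (1:ℝ) else 0)) ∂P
      ≥ (1/2) * ∫ ω, max (s ω) (b ω) ∂P := by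
  set c := ∫ ω, b ω * (if W ≤ b ω then (1:ℝ) else 0) ∂P
  have hc : c ≤ max W 0 := hW ▸ integral_mul_ite_lt_le_max hbi hbm W
  have hmax : Integrable (fun ω => max (s ω) (b ω)) P := hsi.sup hbi
  have hle : ∫ ω, (max (s ω) (b ω) + medianCorrection W c (s ω) (b ω)) ∂P
      ≤ ∫ ω, 2 * fixedPriceWelfare W (s ω) (b ω) ∂P :=
    integral_mono (hmax.add (integrable_medianCorrection hsm hbm hbi W c))
      ((integrable_fixedPriceWelfare hsm hbm hsi hbi W).const_mul 2)
      fun ω => max_add_medianCorrection_le_two_mul_fixedPriceWelfare (hs0 ω) (hb0 ω) hc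
  rw [integral_add hmax (integrable_medianCorrection hsm hbm hbi W c),
    integral_medianCorrection_eq_zero hsm hbm hindep hbi hW, integral_const_mul] at hle
  change _ ≤ ∫ ω, fixedPriceWelfare W (s ω) (b ω) ∂P
  linarith

/-- **Weighted median mechanism guarantees half of the optimal efficiency.**
If `s` and `b` are independent nonnegative integrable random variables with
`E[b] > 0` and `W` satisfies `E[b·𝟙{b < W}] = E[b·𝟙{b ≥ W}]`, then the
fixed-price mechanism with price `W` achieves at least half of `E[max(s,b)]`. -/
theorem weighted_median_mechanism_half_of_optimal
    {Ω : Type*} [MeasurableSpace Ω] {P : Measure Ω} [IsProbabilityMeasure P]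
    (s b : Ω → ℝ) (hsm : Measurable s) (hbm : Measurable b)
    (hindep : IndepFun s b P)
    (hs0 : ∀ ω, 0 ≤ s ω) (hb0 : ∀ ω, 0 ≤ b ω)
    (hsi : Integrable s P) (hbi : Integrable b P)
    (hEb : 0 < ∫ ω, b ω ∂P)
    (W : ℝ)
    (hW : ∫ ω, b ω * (if b ω < W then (1:ℝ) else 0) ∂P
        = ∫ ω, b ω * (if W ≤ b ω then (1:ℝ) else 0) ∂P) :
    ∫ ω, (s ω + (b ω - s ω) * (if s ω ≤ W ∧ W ≤ b ω then (1:ℝ) else 0)) ∂P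
      ≥ (1/2) * ∫ ω, max (s ω) (b ω) ∂P :=
  weighted_median_mechanism_half_of_optimal_general s b hsm hbm hindep hs0 hb0 hsi hbi W hW
end

section
/- Let b be a nonnegative integrable real-valued random variable whose distribution is atomless and satisfies E[b] > 0. Then there exists W ∈ ℝ such that E[b·𝟙{b < W}] = E[b·𝟙{b ≥ W}] = E[b]/2; moreover any such W satisfies P(b > W) ≤ 1/2 and W ≥ E[b]/2. -/
/-!
Since `b` has no atoms, `W ↦ ∫_{b < W} b` is continuous; it tends to `0` at `-∞` and to `E[b]` at
`+∞`, so it takes the value `E[b]/2`. For any such `W`,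
`W · P(b ≥ W) ≤ ∫_{b ≥ W} b = E[b]/2 = ∫_{b < W} b ≤ W · P(b < W)`.
The right end forces `W > 0`, hence `P(b ≥ W) ≤ P(b < W)`, i.e. `P(b ≥ W) ≤ 1/2`, and also
`E[b]/2 ≤ W · P(b < W) ≤ W`.
-/

open MeasureTheory ProbabilityTheory Filter Topology Set

section

variable {Ω : Type*} [MeasurableSpace Ω] {μ : Measure Ω} {f b : Ω → ℝ}

theorem integral_mul_ite_eq_setIntegral (f : Ω → ℝ) {p : Ω → Prop} [DecidablePred p]
    (hp : MeasurableSet {ω | p ω}) :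
    ∫ ω, f ω * (if p ω then (1 : ℝ) else 0) ∂μ = ∫ ω in {ω | p ω}, f ω ∂μ := by
  rw [← integral_indicator hp]
  congr 1 with ω
  simp [indicator_apply]

theorem continuousAt_ite_lt_of_ne {x₀ y : ℝ} (h : y ≠ x₀) (c : ℝ) :
    ContinuousAt (fun x : ℝ => if y < x then c else 0) x₀ := by
  rcases h.lt_or_gt with h | h
  · exact continuousAt_const.congr <| (eventually_gt_nhds h).mono fun x hx => (if_pos hx).symm
  · exact continuousAt_const.congr <|
      (eventually_lt_nhds h).mono fun x hx => (if_neg hx.not_gt).symm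

theorem continuous_setIntegral_lt (hf : Integrable f μ) (hb : Measurable b)
    (hatom : ∀ x, μ {ω | b ω = x} = 0) :
    Continuous fun W => ∫ ω in {ω | b ω < W}, f ω ∂μ := by
  have hset : ∀ W : ℝ, MeasurableSet {ω | b ω < W} := fun W => measurableSet_lt hb measurable_const
  simp_rw [← integral_indicator (hset _)]
  refine continuous_iff_continuousAt.2 fun W₀ => continuousAt_of_dominated ?_ ?_ hf.norm ?_
  · exact Eventually.of_forall fun W => (hf.indicator (hset W)).aestronglyMeasurable
  · exact Eventually.of_forall fun W =>
      Eventually.of_forall fun ω => norm_indicator_le_norm_self _ _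
  · have hne : ∀ᵐ ω ∂μ, b ω ≠ W₀ := measure_eq_zero_iff_ae_notMem.1 (hatom W₀)
    filter_upwards [hne] with ω hω
    simpa only [indicator_apply, mem_ofPred_eq] using continuousAt_ite_lt_of_ne hω (f ω)

theorem tendsto_setIntegral_lt_atTop (hf : Integrable f μ) (hb : Measurable b) :
    Tendsto (fun W => ∫ ω in {ω | b ω < W}, f ω ∂μ) atTop (𝓝 (∫ ω, f ω ∂μ)) := by
  have hunion : ⋃ W : ℝ, {ω | b ω < W} = univ :=
    iUnion_eq_univ_iff.2 fun ω => ⟨b ω + 1, by simp⟩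
  have h := tendsto_setIntegral_of_monotone (μ := μ) (f := f) (s := fun W : ℝ => {ω | b ω < W})
    (fun W => measurableSet_lt hb measurable_const)
    (fun W W' h ω (hω : b ω < W) => hω.trans_le h) (hunion ▸ integrableOn_univ.2 hf)
  rwa [hunion, setIntegral_univ] at h

theorem tendsto_setIntegral_lt_atBot (hf : Integrable f μ) (hb : Measurable b) :
    Tendsto (fun W => ∫ ω in {ω | b ω < W}, f ω ∂μ) atBot (𝓝 0) := by
  have hinter : ⋂ W : ℝ, {ω | b ω < -W} = ∅ :=
    iInter_eq_empty_iff.2 fun ω => ⟨-b ω, by simp⟩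
  have h := tendsto_setIntegral_of_antitone (μ := μ) (f := f) (s := fun W : ℝ => {ω | b ω < -W})
    (fun W => measurableSet_lt hb measurable_const)
    (fun W W' h ω hω => hω.trans_le (neg_le_neg h)) ⟨0, hf.integrableOn⟩
  rw [hinter, setIntegral_empty] at h
  simpa [Function.comp_def] using h.comp tendsto_neg_atBot_atTop

theorem setIntegral_lt_add_setIntegral_le (hf : Integrable f μ) (hb : Measurable b) (W : ℝ) :
    ∫ ω in {ω | b ω < W}, f ω ∂μ + ∫ ω in {ω | W ≤ b ω}, f ω ∂μ = ∫ ω, f ω ∂μ := by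
  have hcompl : {ω | W ≤ b ω} = {ω | b ω < W}ᶜ := by ext; simp
  rw [hcompl]
  exact integral_add_compl (measurableSet_lt hb measurable_const) hf

theorem setIntegral_lt_le_measureReal_mul [IsFiniteMeasure μ] (hb : Measurable b)
    (hbi : Integrable b μ) (W : ℝ) :
    ∫ ω in {ω | b ω < W}, b ω ∂μ ≤ μ.real {ω | b ω < W} * W := by
  calc ∫ ω in {ω | b ω < W}, b ω ∂μ ≤ ∫ _ in {ω | b ω < W}, W ∂μ :=
        setIntegral_mono_on hbi.integrableOn integrableOn_const
          (measurableSet_lt hb measurable_const) fun ω hω => le_of_lt hω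
    _ = μ.real {ω | b ω < W} * W := by rw [setIntegral_const, smul_eq_mul]

theorem measureReal_mul_le_setIntegral_le [IsFiniteMeasure μ] (hb : Measurable b)
    (hbi : Integrable b μ) (W : ℝ) :
    μ.real {ω | W ≤ b ω} * W ≤ ∫ ω in {ω | W ≤ b ω}, b ω ∂μ := by
  calc μ.real {ω | W ≤ b ω} * W = ∫ _ in {ω | W ≤ b ω}, W ∂μ := by
        rw [setIntegral_const, smul_eq_mul]
    _ ≤ ∫ ω in {ω | W ≤ b ω}, b ω ∂μ :=
        setIntegral_mono_on integrableOn_const hbi.integrableOn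
          (measurableSet_le measurable_const hb) fun ω hω => hω

def IsWeightedMedian (μ : Measure Ω) (b : Ω → ℝ) (W : ℝ) : Prop :=
  ∫ ω in {ω | b ω < W}, b ω ∂μ = (∫ ω, b ω ∂μ) / 2 ∧
    ∫ ω in {ω | W ≤ b ω}, b ω ∂μ = (∫ ω, b ω ∂μ) / 2

theorem isWeightedMedian_iff (hb : Measurable b) (hbi : Integrable b μ) {W : ℝ} :
    IsWeightedMedian μ b W ↔ ∫ ω in {ω | b ω < W}, b ω ∂μ = (∫ ω, b ω ∂μ) / 2 := by
  have := setIntegral_lt_add_setIntegral_le hbi hb W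
  exact ⟨And.left, fun h => ⟨h, by linarith⟩⟩

theorem exists_isWeightedMedian (hb : Measurable b) (hbi : Integrable b μ)
    (hatom : ∀ x, μ {ω | b ω = x} = 0) (hpos : 0 < ∫ ω, b ω ∂μ) :
    ∃ W, IsWeightedMedian μ b W := by
  obtain ⟨W, hW⟩ : (∫ ω, b ω ∂μ) / 2 ∈ range fun W => ∫ ω in {ω | b ω < W}, b ω ∂μ :=
    mem_range_of_exists_le_of_exists_ge (continuous_setIntegral_lt hbi hb hatom)
      ((tendsto_setIntegral_lt_atBot hbi hb).eventually (eventually_le_nhds (by linarith))).exists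
      ((tendsto_setIntegral_lt_atTop hbi hb).eventually (eventually_ge_nhds (by linarith))).exists
  exact ⟨W, (isWeightedMedian_iff hb hbi).2 hW⟩

namespace IsWeightedMedian

variable {W : ℝ}

theorem pos [IsFiniteMeasure μ] (h : IsWeightedMedian μ b W) (hb : Measurable b)
    (hbi : Integrable b μ) (hpos : 0 < ∫ ω, b ω ∂μ) : 0 < W := by
  have := setIntegral_lt_le_measureReal_mul hb hbi W
  exact pos_of_mul_pos_right (by linarith [h.1]) measureReal_nonneg

theorem half_integral_le [IsProbabilityMeasure μ] (h : IsWeightedMedian μ b W)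
    (hb : Measurable b) (hbi : Integrable b μ) (hpos : 0 < ∫ ω, b ω ∂μ) :
    (∫ ω, b ω ∂μ) / 2 ≤ W := by
  calc (∫ ω, b ω ∂μ) / 2 = ∫ ω in {ω | b ω < W}, b ω ∂μ := h.1.symm
    _ ≤ μ.real {ω | b ω < W} * W := setIntegral_lt_le_measureReal_mul hb hbi W
    _ ≤ W := mul_le_of_le_one_left (h.pos hb hbi hpos).le measureReal_le_one

theorem measure_gt_le_half [IsProbabilityMeasure μ] (h : IsWeightedMedian μ b W)
    (hb : Measurable b) (hbi : Integrable b μ) (hpos : 0 < ∫ ω, b ω ∂μ) :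
    μ {ω | W < b ω} ≤ 1 / 2 := by
  have hmass : μ.real {ω | W ≤ b ω} * W ≤ μ.real {ω | b ω < W} * W := by
    calc μ.real {ω | W ≤ b ω} * W ≤ ∫ ω in {ω | W ≤ b ω}, b ω ∂μ :=
          measureReal_mul_le_setIntegral_le hb hbi W
      _ = ∫ ω in {ω | b ω < W}, b ω ∂μ := h.2.trans h.1.symm
      _ ≤ μ.real {ω | b ω < W} * W := setIntegral_lt_le_measureReal_mul hb hbi W
  have hcompl : μ.real {ω | b ω < W} = 1 - μ.real {ω | W ≤ b ω} := by
    rw [← probReal_compl_eq_one_sub (measurableSet_le measurable_const hb)]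
    congr 1 with ω
    simp
  have hreal : μ.real {ω | W ≤ b ω} ≤ 1 / 2 := by
    linarith [le_of_mul_le_mul_right hmass (h.pos hb hbi hpos)]
  calc μ {ω | W < b ω} ≤ μ {ω | W ≤ b ω} := measure_mono fun ω (hω : W < b ω) => hω.le
    _ ≤ 1 / 2 := by
      rw [← ENNReal.toReal_le_toReal (measure_ne_top _ _) (by simp)]
      simpa [measureReal_def] using hreal

end IsWeightedMedian

end

theorem weighted_median_exists_and_properties_general
    {Ω : Type*} [MeasurableSpace Ω] {P : Measure Ω} [IsProbabilityMeasure P]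
    (b : Ω → ℝ) (hbm : Measurable b)
    (hbi : Integrable b P)
    (hatomless : ∀ x : ℝ, P {ω | b ω = x} = 0)
    (hEb : 0 < ∫ ω, b ω ∂P) :
    (∃ W : ℝ,
        ∫ ω, b ω * (if b ω < W then (1:ℝ) else 0) ∂P = (∫ ω, b ω ∂P) / 2 ∧
        ∫ ω, b ω * (if W ≤ b ω then (1:ℝ) else 0) ∂P = (∫ ω, b ω ∂P) / 2) ∧
    (∀ W : ℝ,
        (∫ ω, b ω * (if b ω < W then (1:ℝ) else 0) ∂P = (∫ ω, b ω ∂P) / 2 ∧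
         ∫ ω, b ω * (if W ≤ b ω then (1:ℝ) else 0) ∂P = (∫ ω, b ω ∂P) / 2) →
        P {ω | W < b ω} ≤ 1/2 ∧ (∫ ω, b ω ∂P) / 2 ≤ W) := by
  have hlt : ∀ W : ℝ, MeasurableSet {ω | b ω < W} := fun W => measurableSet_lt hbm measurable_const
  have hle : ∀ W : ℝ, MeasurableSet {ω | W ≤ b ω} := fun W => measurableSet_le measurable_const hbm
  simp only [integral_mul_ite_eq_setIntegral _ (hlt _), integral_mul_ite_eq_setIntegral _ (hle _)]
  exact ⟨exists_isWeightedMedian hbm hbi hatomless hEb, fun W (h : IsWeightedMedian P b W) =>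
    ⟨h.measure_gt_le_half hbm hbi hEb, h.half_integral_le hbm hbi hEb⟩⟩

/-- **Existence and properties of a weighted median.**
If `b` is a nonnegative integrable random variable whose distribution is
atomless and `E[b] > 0`, then there exists `W` with
`E[b·𝟙{b < W}] = E[b·𝟙{b ≥ W}] = E[b]/2`; moreover any such `W` satisfies
`P(b > W) ≤ 1/2` and `W ≥ E[b]/2`. -/
theorem weighted_median_exists_and_properties
    {Ω : Type*} [MeasurableSpace Ω] {P : Measure Ω} [IsProbabilityMeasure P]
    (b : Ω → ℝ) (hbm : Measurable b)
    (hb0 : ∀ ω, 0 ≤ b ω) (hbi : Integrable b P)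
    (hatomless : ∀ x : ℝ, P {ω | b ω = x} = 0)
    (hEb : 0 < ∫ ω, b ω ∂P) :
    (∃ W : ℝ,
        ∫ ω, b ω * (if b ω < W then (1:ℝ) else 0) ∂P = (∫ ω, b ω ∂P) / 2 ∧
        ∫ ω, b ω * (if W ≤ b ω then (1:ℝ) else 0) ∂P = (∫ ω, b ω ∂P) / 2) ∧
    (∀ W : ℝ,
        (∫ ω, b ω * (if b ω < W then (1:ℝ) else 0) ∂P = (∫ ω, b ω ∂P) / 2 ∧
         ∫ ω, b ω * (if W ≤ b ω then (1:ℝ) else 0) ∂P = (∫ ω, b ω ∂P) / 2) →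
        P {ω | W < b ω} ≤ 1/2 ∧ (∫ ω, b ω ∂P) / 2 ≤ W) :=
  weighted_median_exists_and_properties_general b hbm hbi hatomless hEb
end

section
/- Let (Ω, P) be a probability space and let v_s, v_b : Ω × [0,1] → ℝ be measurable, with v_s(ω, ·) and v_b(ω, ·) nonnegative and nondecreasing on [0,1] for each ω, and with all relevant quantities integrable. Let s = v_s(·, 1) and b = v_b(·, 1), and let α ∈ (0, 1]. Suppose a price p ∈ ℝ satisfies E[s + (b − s)·𝟙{s ≤ p ∧ p ≤ b}] ≥ α·E[max(s, b)]. Then E[s + (b − s)·𝟙{s ≤ p ∧ p ≤ b}] ≥ (α/(α+1)) · E[sup_{x ∈ [0,1]} (v_s(1 − x) + v_b(x))]. -/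
open MeasureTheory ProbabilityTheory

/-!
The expected welfare `W` of trading the whole good at `p` is at least `E[s]`, since trade only
happens when `s ≤ b`, and by hypothesis at least `α E[max(s, b)] ≥ α E[b]`; hence
`(α + 1) W ≥ α (E[s] + E[b])`. By monotonicity every divisible allocation is worth at most
`v_s(1) + v_b(1) = s + b`, so `E[s] + E[b]` dominates the first-best efficiency.
-/

noncomputable def tradeWelfare (p s b : ℝ) : ℝ :=
  s + (b - s) * (if s ≤ p ∧ p ≤ b then (1:ℝ) else 0)

noncomputable def optWelfare (vs vb : ℝ → ℝ) : ℝ :=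
  ⨆ x : Set.Icc (0:ℝ) 1, (vs (1 - (x:ℝ)) + vb (x:ℝ))

section TradeWelfare

variable (p : ℝ)

theorem tradeWelfare_eq_ite (s b : ℝ) :
    tradeWelfare p s b = if s ≤ p ∧ p ≤ b then b else s := by
  unfold tradeWelfare
  split_ifs <;> ring

theorem le_tradeWelfare (s b : ℝ) : s ≤ tradeWelfare p s b := by
  rw [tradeWelfare_eq_ite]
  split_ifs with h
  · exact h.1.trans h.2
  · exact le_rfl

theorem abs_tradeWelfare_le (s b : ℝ) : |tradeWelfare p s b| ≤ |s| + |b| := by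
  rw [tradeWelfare_eq_ite]
  split_ifs
  · exact le_add_of_nonneg_left (abs_nonneg s)
  · exact le_add_of_nonneg_right (abs_nonneg b)

theorem measurable_tradeWelfare : Measurable (fun q : ℝ × ℝ => tradeWelfare p q.1 q.2) := by
  simp only [tradeWelfare_eq_ite]
  exact Measurable.ite ((measurableSet_le measurable_fst measurable_const).inter
    (measurableSet_le measurable_const measurable_snd)) measurable_snd measurable_fst

theorem MeasureTheory.Integrable.tradeWelfare {Ω : Type*} [MeasurableSpace Ω] {P : Measure Ω}
    {s b : Ω → ℝ} (hs : Integrable s P) (hb : Integrable b P) :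
    Integrable (fun ω => tradeWelfare p (s ω) (b ω)) P := by
  refine (hs.abs.add hb.abs).mono' ?_ (Filter.Eventually.of_forall fun ω => ?_)
  · exact ((measurable_tradeWelfare p).comp_aemeasurable
      (hs.aemeasurable.prodMk hb.aemeasurable)).aestronglyMeasurable
  · exact abs_tradeWelfare_le p (s ω) (b ω)

end TradeWelfare

theorem optWelfare_le_add {vs vb : ℝ → ℝ} (hvs : MonotoneOn vs (Set.Icc 0 1))
    (hvb : MonotoneOn vb (Set.Icc 0 1)) : optWelfare vs vb ≤ vs 1 + vb 1 := by
  have : Nonempty (Set.Icc (0:ℝ) 1) := ⟨⟨0, by norm_num⟩⟩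
  refine ciSup_le fun ⟨x, hx0, hx1⟩ => add_le_add ?_ ?_
  · exact hvs ⟨by linarith, by linarith⟩ ⟨zero_le_one, le_rfl⟩ (by linarith)
  · exact hvb ⟨hx0, hx1⟩ ⟨zero_le_one, le_rfl⟩ hx1

theorem divisible_monotone_reduction_general
    {Ω : Type*} [MeasurableSpace Ω] {P : Measure Ω} [IsProbabilityMeasure P]
    (vs vb : Ω → ℝ → ℝ)
    (hvsmono : ∀ ω, MonotoneOn (vs ω) (Set.Icc (0:ℝ) 1))
    (hvbmono : ∀ ω, MonotoneOn (vb ω) (Set.Icc (0:ℝ) 1))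
    (hsi : Integrable (fun ω => vs ω 1) P)
    (hbi : Integrable (fun ω => vb ω 1) P)
    (hopti : Integrable
      (fun ω => ⨆ x : Set.Icc (0:ℝ) 1, (vs ω (1 - (x:ℝ)) + vb ω (x:ℝ))) P)
    (α : ℝ) (hα0 : 0 < α) (p : ℝ)
    (hp : ∫ ω, (vs ω 1 + (vb ω 1 - vs ω 1) *
            (if vs ω 1 ≤ p ∧ p ≤ vb ω 1 then (1:ℝ) else 0)) ∂P
          ≥ α * ∫ ω, max (vs ω 1) (vb ω 1) ∂P) :
    ∫ ω, (vs ω 1 + (vb ω 1 - vs ω 1) *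
            (if vs ω 1 ≤ p ∧ p ≤ vb ω 1 then (1:ℝ) else 0)) ∂P
      ≥ (α / (α + 1)) *
          ∫ ω, ⨆ x : Set.Icc (0:ℝ) 1, (vs ω (1 - (x:ℝ)) + vb ω (x:ℝ)) ∂P := by
  change ∫ ω, tradeWelfare p (vs ω 1) (vb ω 1) ∂P ≥ _ at hp ⊢
  change _ ≥ _ * ∫ ω, optWelfare (vs ω) (vb ω) ∂P
  have hseller : ∫ ω, vs ω 1 ∂P ≤ ∫ ω, tradeWelfare p (vs ω 1) (vb ω 1) ∂P :=
    integral_mono hsi (hsi.tradeWelfare p hbi) fun ω => le_tradeWelfare p _ _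
  have hbuyer : ∫ ω, vb ω 1 ∂P ≤ ∫ ω, max (vs ω 1) (vb ω 1) ∂P :=
    integral_mono hbi (hsi.sup hbi) fun ω => le_max_right _ _
  have hopt : ∫ ω, optWelfare (vs ω) (vb ω) ∂P ≤ ∫ ω, vs ω 1 ∂P + ∫ ω, vb ω 1 ∂P := by
    rw [← integral_add hsi hbi]
    exact integral_mono hopti (hsi.add hbi) fun ω => optWelfare_le_add (hvsmono ω) (hvbmono ω)
  rw [ge_iff_le, div_mul_eq_mul_div, div_le_iff₀ (by linarith)]
  nlinarith [mul_le_mul_of_nonneg_left hopt hα0.le]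

/-- **Divisible good with monotone valuations: α/(α+1)-approximation.**
The seller initially owns a divisible good; `vs ω` and `vb ω` are nonnegative
nondecreasing valuations on `[0,1]`. If the price `p` is an `α`-approximation
for the induced indivisible bilateral trade instance with `s = vs(·,1)` and
`b = vb(·,1)`, then trading the whole good at price `p` achieves at least an
`α/(α+1)` fraction of the optimal divisible efficiency
`E[sup_{x ∈ [0,1]} (vs(1-x) + vb(x))]`. -/
theorem divisible_monotone_reduction
    {Ω : Type*} [MeasurableSpace Ω] {P : Measure Ω} [IsProbabilityMeasure P]
    (vs vb : Ω → ℝ → ℝ)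
    (hvsm : Measurable (fun q : Ω × ℝ => vs q.1 q.2))
    (hvbm : Measurable (fun q : Ω × ℝ => vb q.1 q.2))
    (hvs0 : ∀ ω, ∀ x ∈ Set.Icc (0:ℝ) 1, 0 ≤ vs ω x)
    (hvb0 : ∀ ω, ∀ x ∈ Set.Icc (0:ℝ) 1, 0 ≤ vb ω x)
    (hvsmono : ∀ ω, MonotoneOn (vs ω) (Set.Icc (0:ℝ) 1))
    (hvbmono : ∀ ω, MonotoneOn (vb ω) (Set.Icc (0:ℝ) 1))
    (hsi : Integrable (fun ω => vs ω 1) P)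
    (hbi : Integrable (fun ω => vb ω 1) P)
    (hopti : Integrable
      (fun ω => ⨆ x : Set.Icc (0:ℝ) 1, (vs ω (1 - (x:ℝ)) + vb ω (x:ℝ))) P)
    (α : ℝ) (hα0 : 0 < α) (hα1 : α ≤ 1) (p : ℝ)
    (hp : ∫ ω, (vs ω 1 + (vb ω 1 - vs ω 1) *
            (if vs ω 1 ≤ p ∧ p ≤ vb ω 1 then (1:ℝ) else 0)) ∂P
          ≥ α * ∫ ω, max (vs ω 1) (vb ω 1) ∂P) :
    ∫ ω, (vs ω 1 + (vb ω 1 - vs ω 1) *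
            (if vs ω 1 ≤ p ∧ p ≤ vb ω 1 then (1:ℝ) else 0)) ∂P
      ≥ (α / (α + 1)) *
          ∫ ω, ⨆ x : Set.Icc (0:ℝ) 1, (vs ω (1 - (x:ℝ)) + vb ω (x:ℝ)) ∂P :=
  divisible_monotone_reduction_general vs vb hvsmono hvbmono hsi hbi hopti α hα0 p hp
end

section
/- Let (Ω, P) be a probability space and let v₁, v₂ : Ω × [0,1] → ℝ be measurable, with v₁(ω, ·) and v₂(ω, ·) nonnegative, nondecreasing, concave on [0,1] and satisfying vᵢ(ω, 0) = 0 for each ω, with all relevant quantities integrable. Let α ∈ (0, 1], set x₀ = α/(α+1), and define s' = v₁(·, 1) − v₁(·, x₀) and b' = v₂(·, 1 − x₀). Suppose a price p ∈ ℝ satisfies E[s' + (b' − s')·𝟙{s' ≤ p ∧ p ≤ b'}] ≥ α·E[max(s', b')]. Then the mechanism that first gives fraction x₀ to player 1 and then trades the remaining 1 − x₀ at price p achieves E[v₁(·, x₀) + s' + (b' − s')·𝟙{s' ≤ p ∧ p ≤ b'}] ≥ (α/(α+1)) · E[sup_{y ∈ [0,1]} (v₁(y) + v₂(1 − y))]. 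-/
/-!
Write `x₀ = α/(α+1)`, so that `x₀ = α (1 - x₀)`. Concavity and `vᵢ(0) = 0` make `t ↦ vᵢ(t)/t`
nonincreasing, so for every split `y` of the good, `x₀ v₁(y) ≤ v₁(x₀ y) ≤ v₁(x₀)` and
`(1 - x₀) v₂(1 - y) ≤ v₂(1 - x₀)`. Hence, pointwise,
`x₀ (v₁(y) + v₂(1 - y)) ≤ v₁(x₀) + α b' ≤ v₁(x₀) + α max(s', b')`;
taking expectations, the price guarantee `E[trade] ≥ α E[max(s', b')]` bounds the last term by the
welfare of the trade on the remainder.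
-/

open MeasureTheory Set

lemma ConcaveOn.mul_le_map_smul {E : Type*} [AddCommGroup E] [Module ℝ E] {s : Set E}
    {f : E → ℝ} (hf : ConcaveOn ℝ s f) (h0s : 0 ∈ s) (hf0 : f 0 = 0) {x : E} (hx : x ∈ s)
    {t : ℝ} (ht0 : 0 ≤ t) (ht1 : t ≤ 1) : t * f x ≤ f (t • x) := by
  simpa [hf0] using hf.2 hx h0s ht0 (sub_nonneg.2 ht1) (add_sub_cancel t 1)

lemma div_add_one_mem_Icc {α : ℝ} (hα : 0 ≤ α) : α / (α + 1) ∈ Icc (0:ℝ) 1 :=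
  ⟨by positivity, (div_le_one (by positivity)).2 (by linarith)⟩

section Valuation

variable {f : ℝ → ℝ}

lemma MonotoneOn.nonneg_of_map_zero (hmono : MonotoneOn f (Icc 0 1)) (hf0 : f 0 = 0) {x : ℝ}
    (hx : x ∈ Icc 0 1) : 0 ≤ f x :=
  hf0 ▸ hmono (left_mem_Icc.2 zero_le_one) hx hx.1

lemma mul_le_of_concaveOn_of_monotoneOn (hconc : ConcaveOn ℝ (Icc 0 1) f)
    (hmono : MonotoneOn f (Icc 0 1)) (hf0 : f 0 = 0) {t y : ℝ} (ht : t ∈ Icc 0 1)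
    (hy : y ∈ Icc 0 1) : t * f y ≤ f t :=
  (hconc.mul_le_map_smul (left_mem_Icc.2 zero_le_one) hf0 hy ht.1 ht.2).trans <|
    hmono ⟨mul_nonneg ht.1 hy.1, mul_le_one₀ ht.2 hy.1 hy.2⟩ ht (mul_le_of_le_one_right ht.1 hy.2)

variable {g : ℝ → ℝ}

lemma iSup_add_nonneg_of_monotoneOn (hfm : MonotoneOn f (Icc 0 1)) (hf0 : f 0 = 0)
    (hgm : MonotoneOn g (Icc 0 1)) (hg0 : g 0 = 0) :
    0 ≤ ⨆ y : Icc (0:ℝ) 1, (f y + g (1 - y)) :=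
  Real.iSup_nonneg fun ⟨_, hy⟩ =>
    add_nonneg (hfm.nonneg_of_map_zero hf0 hy)
      (hgm.nonneg_of_map_zero hg0 (Icc.mem_iff_one_sub_mem.1 hy))

lemma mul_iSup_le_of_concaveOn (hfc : ConcaveOn ℝ (Icc 0 1) f) (hfm : MonotoneOn f (Icc 0 1))
    (hf0 : f 0 = 0) (hgc : ConcaveOn ℝ (Icc 0 1) g) (hgm : MonotoneOn g (Icc 0 1))
    (hg0 : g 0 = 0) {α : ℝ} (hα : 0 < α) :
    α / (α + 1) * ⨆ y : Icc (0:ℝ) 1, (f y + g (1 - y))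
      ≤ f (α / (α + 1)) + α * g (1 - α / (α + 1)) := by
  set x₀ := α / (α + 1) with hx₀
  have hx₀mem : x₀ ∈ Icc (0:ℝ) 1 := div_add_one_mem_Icc hα.le
  have hcmem : 1 - x₀ ∈ Icc (0:ℝ) 1 := Icc.mem_iff_one_sub_mem.1 hx₀mem
  have hx₀_eq : x₀ = α * (1 - x₀) := by rw [hx₀]; field_simp; ring
  rw [Real.mul_iSup_of_nonneg hx₀mem.1]
  refine ciSup_le fun ⟨y, hy⟩ => ?_
  have hcy : 1 - y ∈ Icc (0:ℝ) 1 := Icc.mem_iff_one_sub_mem.1 hy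
  calc x₀ * (f y + g (1 - y)) = x₀ * f y + α * ((1 - x₀) * g (1 - y)) := by
        linear_combination g (1 - y) * hx₀_eq
    _ ≤ f x₀ + α * g (1 - x₀) := by
        gcongr
        · exact mul_le_of_concaveOn_of_monotoneOn hfc hfm hf0 hx₀mem hy
        · exact mul_le_of_concaveOn_of_monotoneOn hgc hgm hg0 hcmem hcy

end Valuation

section Integrability

variable {Ω : Type*} [MeasurableSpace Ω] {P : Measure Ω}

lemma integrable_apply_of_monotoneOn {v : Ω → ℝ → ℝ}
    (hm : Measurable (fun q : Ω × ℝ => v q.1 q.2)) (hmono : ∀ ω, MonotoneOn (v ω) (Icc 0 1))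
    (hv0 : ∀ ω, v ω 0 = 0) (hv1 : Integrable (fun ω => v ω 1) P) {x : ℝ} (hx : x ∈ Icc 0 1) :
    Integrable (fun ω => v ω x) P :=
  hv1.mono hm.of_uncurry_right.aestronglyMeasurable <| ae_of_all _ fun ω => by
    rw [Real.norm_of_nonneg ((hmono ω).nonneg_of_map_zero (hv0 ω) hx),
      Real.norm_of_nonneg ((hmono ω).nonneg_of_map_zero (hv0 ω) (right_mem_Icc.2 zero_le_one))]
    exact hmono ω hx (right_mem_Icc.2 zero_le_one) hx.2

lemma integrable_add_sub_mul_ite {s b : Ω → ℝ} (hs : Integrable s P) (hb : Integrable b P)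
    (hsm : Measurable s) (hbm : Measurable b) (p : ℝ) :
    Integrable (fun ω => s ω + (b ω - s ω) * if s ω ≤ p ∧ p ≤ b ω then (1:ℝ) else 0) P := by
  have htrade : MeasurableSet {ω | s ω ≤ p ∧ p ≤ b ω} :=
    (measurableSet_le hsm measurable_const).inter (measurableSet_le measurable_const hbm)
  refine hs.add (((hb.sub hs).indicator htrade).congr (ae_of_all _ fun ω => ?_))
  by_cases h : s ω ≤ p ∧ p ≤ b ω <;> simp [h]

end Integrability

theorem divisible_concave_reduction_general
    {Ω : Type*} [MeasurableSpace Ω] {P : Measure Ω}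
    (v₁ v₂ : Ω → ℝ → ℝ)
    (hv1m : Measurable (fun q : Ω × ℝ => v₁ q.1 q.2))
    (hv2m : Measurable (fun q : Ω × ℝ => v₂ q.1 q.2))
    (hv1mono : ∀ ω, MonotoneOn (v₁ ω) (Set.Icc (0:ℝ) 1))
    (hv2mono : ∀ ω, MonotoneOn (v₂ ω) (Set.Icc (0:ℝ) 1))
    (hv1conc : ∀ ω, ConcaveOn ℝ (Set.Icc (0:ℝ) 1) (v₁ ω))
    (hv2conc : ∀ ω, ConcaveOn ℝ (Set.Icc (0:ℝ) 1) (v₂ ω))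
    (hv1zero : ∀ ω, v₁ ω 0 = 0) (hv2zero : ∀ ω, v₂ ω 0 = 0)
    (h1i : Integrable (fun ω => v₁ ω 1) P)
    (h2i : Integrable (fun ω => v₂ ω 1) P)
    (α : ℝ) (hα0 : 0 < α) (p : ℝ)
    (hp : ∫ ω, ((v₁ ω 1 - v₁ ω (α / (α + 1)))
            + (v₂ ω (1 - α / (α + 1)) - (v₁ ω 1 - v₁ ω (α / (α + 1)))) *
              (if v₁ ω 1 - v₁ ω (α / (α + 1)) ≤ p ∧ p ≤ v₂ ω (1 - α / (α + 1))
                then (1:ℝ) else 0)) ∂P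
          ≥ α * ∫ ω, max (v₁ ω 1 - v₁ ω (α / (α + 1))) (v₂ ω (1 - α / (α + 1))) ∂P) :
    ∫ ω, (v₁ ω (α / (α + 1)) + (v₁ ω 1 - v₁ ω (α / (α + 1)))
            + (v₂ ω (1 - α / (α + 1)) - (v₁ ω 1 - v₁ ω (α / (α + 1)))) *
              (if v₁ ω 1 - v₁ ω (α / (α + 1)) ≤ p ∧ p ≤ v₂ ω (1 - α / (α + 1))
                then (1:ℝ) else 0)) ∂P
      ≥ (α / (α + 1)) *
          ∫ ω, ⨆ y : Set.Icc (0:ℝ) 1, (v₁ ω (y:ℝ) + v₂ ω (1 - (y:ℝ))) ∂P := by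
  set x₀ := α / (α + 1)
  have hx₀mem : x₀ ∈ Icc (0:ℝ) 1 := div_add_one_mem_Icc hα0.le
  have hint₁ := integrable_apply_of_monotoneOn hv1m hv1mono hv1zero h1i hx₀mem
  have hintb := integrable_apply_of_monotoneOn hv2m hv2mono hv2zero h2i
    (Icc.mem_iff_one_sub_mem.1 hx₀mem)
  have hints : Integrable (fun ω => v₁ ω 1 - v₁ ω x₀) P := h1i.sub hint₁
  have hintmax : Integrable (fun ω => α * max (v₁ ω 1 - v₁ ω x₀) (v₂ ω (1 - x₀))) P :=
    (hints.sup hintb).const_mul α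
  have hopt : x₀ * ∫ ω, ⨆ y : Icc (0:ℝ) 1, (v₁ ω y + v₂ ω (1 - y)) ∂P
      ≤ ∫ ω, v₁ ω x₀ ∂P + α * ∫ ω, max (v₁ ω 1 - v₁ ω x₀) (v₂ ω (1 - x₀)) ∂P := by
    rw [← integral_const_mul, ← integral_const_mul, ← integral_add hint₁ hintmax]
    refine integral_mono_of_nonneg (ae_of_all _ fun ω => ?_) (hint₁.add hintmax)
      (ae_of_all _ fun ω => ?_)
    · exact mul_nonneg hx₀mem.1 <|
        iSup_add_nonneg_of_monotoneOn (hv1mono ω) (hv1zero ω) (hv2mono ω) (hv2zero ω)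
    · exact (mul_iSup_le_of_concaveOn (hv1conc ω) (hv1mono ω) (hv1zero ω) (hv2conc ω)
        (hv2mono ω) (hv2zero ω) hα0).trans
        (add_le_add_right (mul_le_mul_of_nonneg_left (le_max_right _ _) hα0.le) _)
  have hsplit := integral_add hint₁ (integrable_add_sub_mul_ite hints hintb
    (hv1m.of_uncurry_right.sub hv1m.of_uncurry_right) hv2m.of_uncurry_right p)
  simp only [← add_assoc] at hsplit
  linarith

/-- **Divisible good with concave valuations: α/(α+1)-approximation.**
Each player `i` has a normalized, nonnegative, nondecreasing and concave
valuation `vᵢ ω` on `[0,1]`. With `x₀ = α/(α+1)`, `s' = v₁(1) − v₁(x₀)`,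
`b' = v₂(1 − x₀)`, if the price `p` is an `α`-approximation for the induced
indivisible bilateral trade instance `(s', b')`, then giving player 1 the
fraction `x₀` for free and trading the remaining `1 − x₀` at price `p`
achieves an `α/(α+1)` fraction of the optimal divisible efficiency. -/
theorem divisible_concave_reduction
    {Ω : Type*} [MeasurableSpace Ω] {P : Measure Ω} [IsProbabilityMeasure P]
    (v₁ v₂ : Ω → ℝ → ℝ)
    (hv1m : Measurable (fun q : Ω × ℝ => v₁ q.1 q.2))
    (hv2m : Measurable (fun q : Ω × ℝ => v₂ q.1 q.2))
    (hv10 : ∀ ω, ∀ x ∈ Set.Icc (0:ℝ) 1, 0 ≤ v₁ ω x)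
    (hv20 : ∀ ω, ∀ x ∈ Set.Icc (0:ℝ) 1, 0 ≤ v₂ ω x)
    (hv1mono : ∀ ω, MonotoneOn (v₁ ω) (Set.Icc (0:ℝ) 1))
    (hv2mono : ∀ ω, MonotoneOn (v₂ ω) (Set.Icc (0:ℝ) 1))
    (hv1conc : ∀ ω, ConcaveOn ℝ (Set.Icc (0:ℝ) 1) (v₁ ω))
    (hv2conc : ∀ ω, ConcaveOn ℝ (Set.Icc (0:ℝ) 1) (v₂ ω))
    (hv1zero : ∀ ω, v₁ ω 0 = 0) (hv2zero : ∀ ω, v₂ ω 0 = 0)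
    (h1i : Integrable (fun ω => v₁ ω 1) P)
    (h2i : Integrable (fun ω => v₂ ω 1) P)
    (hopti : Integrable
      (fun ω => ⨆ y : Set.Icc (0:ℝ) 1, (v₁ ω (y:ℝ) + v₂ ω (1 - (y:ℝ)))) P)
    (α : ℝ) (hα0 : 0 < α) (hα1 : α ≤ 1) (p : ℝ)
    (hp : ∫ ω, ((v₁ ω 1 - v₁ ω (α / (α + 1)))
            + (v₂ ω (1 - α / (α + 1)) - (v₁ ω 1 - v₁ ω (α / (α + 1)))) *
              (if v₁ ω 1 - v₁ ω (α / (α + 1)) ≤ p ∧ p ≤ v₂ ω (1 - α / (α + 1))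
                then (1:ℝ) else 0)) ∂P
          ≥ α * ∫ ω, max (v₁ ω 1 - v₁ ω (α / (α + 1))) (v₂ ω (1 - α / (α + 1))) ∂P) :
    ∫ ω, (v₁ ω (α / (α + 1)) + (v₁ ω 1 - v₁ ω (α / (α + 1)))
            + (v₂ ω (1 - α / (α + 1)) - (v₁ ω 1 - v₁ ω (α / (α + 1)))) *
              (if v₁ ω 1 - v₁ ω (α / (α + 1)) ≤ p ∧ p ≤ v₂ ω (1 - α / (α + 1))
                then (1:ℝ) else 0)) ∂P
      ≥ (α / (α + 1)) *
          ∫ ω, ⨆ y : Set.Icc (0:ℝ) 1, (v₁ ω (y:ℝ) + v₂ ω (1 - (y:ℝ))) ∂P :=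
  divisible_concave_reduction_general v₁ v₂ hv1m hv2m hv1mono hv2mono hv1conc hv2conc hv1zero
    hv2zero h1i h2i α hα0 p hp
end

section
/- Let t > 2 and λ = 1/(1 − e^{−t}), and let s and b be independent random variables on [0, t] with densities f_s(x) = λ·e^{x−t} and f_b(x) = λ·e^{−x} respectively. Then for every price p ∈ ℝ: E[(b − s)·𝟙{s ≤ p ∧ p ≤ b}] ≤ [(2 + (t + 2)·e^{−t}) / (t − 2 + (t + 2)·e^{−t})] · E[max(b − s, 0)]. In particular, every fixed-price mechanism achieves at most an O(1/t) fraction of the optimal gain from trade, so no fixed-price (dominant-strategy) mechanism guarantees a constant approximation to the optimal gain from trade. -/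
/-!
Independence turns both expectations into iterated integrals against the two densities, and these
are elementary. Writing `c = λ`, the first-best gain from trade is
`c² e^{-t} (t - 2 + (t + 2) e^{-t})`, whereas a price `p ∈ [0, t]` earns
`c² e^{-t} (2 + (t + 2) e^{-t} - (p + 2) e^{-p} - (t - p + 2) e^{p - t}) ≤ c² e^{-t} (2 + (t + 2) e^{-t})`,
and a price outside `[0, t]` never trades.
-/

open MeasureTheory ProbabilityTheory Real Set

namespace MeasureTheory

theorem integral_withDensity_ofReal {α : Type*} [MeasurableSpace α] {μ : Measure α}
    {f : α → ℝ} (hf : Measurable f) (hf0 : ∀ x, 0 ≤ f x) (g : α → ℝ) :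
    ∫ x, g x ∂μ.withDensity (fun x => ENNReal.ofReal (f x)) = ∫ x, f x * g x ∂μ := by
  rw [integral_withDensity_eq_integral_toReal_smul hf.ennreal_ofReal
    (ae_of_all _ fun _ => ENNReal.ofReal_lt_top)]
  simp [ENNReal.toReal_ofReal (hf0 _)]

theorem ae_mem_of_withDensity_restrict {α : Type*} [MeasurableSpace α] {μ : Measure α}
    {S : Set α} (hS : MeasurableSet S) (f : α → ENNReal) :
    ∀ᵐ x ∂(μ.restrict S).withDensity f, x ∈ S :=
  (withDensity_absolutelyContinuous _ _).ae_le (ae_restrict_mem hS)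

theorem integrable_prod_of_ae_mem_of_abs_le {α β : Type*} [MeasurableSpace α]
    [MeasurableSpace β] {μ : Measure α} {ν : Measure β} [IsFiniteMeasure μ] [IsFiniteMeasure ν]
    {S : Set α} {T : Set β} (hμS : ∀ᵐ x ∂μ, x ∈ S) (hνT : ∀ᵐ y ∂ν, y ∈ T)
    {F : α → β → ℝ} (hF : Measurable (Function.uncurry F)) {C : ℝ}
    (hC : ∀ x ∈ S, ∀ y ∈ T, |F x y| ≤ C) :
    Integrable (Function.uncurry F) (μ.prod ν) := by
  refine (integrable_const C).mono' hF.aestronglyMeasurable ?_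
  filter_upwards [Measure.quasiMeasurePreserving_fst.ae hμS,
    Measure.quasiMeasurePreserving_snd.ae hνT] with z hx hy
  exact hC z.1 hx z.2 hy

end MeasureTheory

namespace ProbabilityTheory

variable {Ω α β : Type*} [MeasurableSpace Ω] [MeasurableSpace α] [MeasurableSpace β]
  {P : Measure Ω} [IsFiniteMeasure P] {X : Ω → α} {Y : Ω → β}

theorem IndepFun.integral_comp_eq_integral_integral (hX : Measurable X) (hY : Measurable Y)
    (hXY : IndepFun X Y P) {F : α → β → ℝ}
    (hF : Integrable (Function.uncurry F) ((P.map X).prod (P.map Y))) :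
    ∫ ω, F (X ω) (Y ω) ∂P = ∫ x, ∫ y, F x y ∂P.map Y ∂P.map X := by
  have hmap := hXY.map_prod_eq_prod_map_map hX.aemeasurable hY.aemeasurable
  calc ∫ ω, F (X ω) (Y ω) ∂P = ∫ z, Function.uncurry F z ∂P.map (fun ω => (X ω, Y ω)) :=
        (integral_map (hX.prodMk hY).aemeasurable (hmap ▸ hF.1)).symm
    _ = ∫ x, ∫ y, F x y ∂P.map Y ∂P.map X := by rw [hmap, integral_prod _ hF]; rfl

theorem IndepFun.integral_comp_eq_setIntegral_density (hX : Measurable X) (hY : Measurable Y)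
    (hXY : IndepFun X Y P) {μ : Measure α} {ν : Measure β} {S : Set α} {T : Set β}
    (hS : MeasurableSet S) (hT : MeasurableSet T) {f : α → ℝ} {g : β → ℝ}
    (hf : Measurable f) (hg : Measurable g) (hf0 : ∀ x, 0 ≤ f x) (hg0 : ∀ y, 0 ≤ g y)
    (hXlaw : P.map X = (μ.restrict S).withDensity (fun x => ENNReal.ofReal (f x)))
    (hYlaw : P.map Y = (ν.restrict T).withDensity (fun y => ENNReal.ofReal (g y)))
    (F : α → β → ℝ) (hF : Measurable (Function.uncurry F)) {C : ℝ}
    (hC : ∀ x ∈ S, ∀ y ∈ T, |F x y| ≤ C) :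
    ∫ ω, F (X ω) (Y ω) ∂P = ∫ x in S, f x * ∫ y in T, g y * F x y ∂ν ∂μ := by
  have hXS : ∀ᵐ x ∂P.map X, x ∈ S := hXlaw ▸ ae_mem_of_withDensity_restrict hS _
  have hYT : ∀ᵐ y ∂P.map Y, y ∈ T := hYlaw ▸ ae_mem_of_withDensity_restrict hT _
  rw [hXY.integral_comp_eq_integral_integral hX hY
    (integrable_prod_of_ae_mem_of_abs_le hXS hYT hF hC), hXlaw, hYlaw,
    integral_withDensity_ofReal hf hf0]
  simp_rw [integral_withDensity_ofReal hg hg0]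

end ProbabilityTheory

noncomputable def fixedPriceGain (p x y : ℝ) : ℝ := (y - x) * if x ≤ p ∧ p ≤ y then 1 else 0

theorem measurable_fixedPriceGain (p : ℝ) : Measurable (Function.uncurry (fixedPriceGain p)) :=
  (measurable_snd.sub measurable_fst).mul <| Measurable.ite
    ((measurableSet_le measurable_fst measurable_const).inter
      (measurableSet_le measurable_const measurable_snd)) measurable_const measurable_const

theorem abs_fixedPriceGain_le {p t x y : ℝ} (hx : x ∈ Icc 0 t) (hy : y ∈ Icc 0 t) :
    |fixedPriceGain p x y| ≤ t := by
  rw [fixedPriceGain]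
  split_ifs
  · simpa using abs_sub_le_of_nonneg_of_le hy.1 hy.2 hx.1 hx.2
  · simpa using hx.1.trans hx.2

theorem integral_sub_mul_exp_neg (x a b : ℝ) :
    ∫ y in a..b, (y - x) * exp (-y) = (a - x + 1) * exp (-a) - (b - x + 1) * exp (-b) := by
  have hderiv (y : ℝ) :
      HasDerivAt (fun y => -((y - x + 1) * exp (-y))) ((y - x) * exp (-y)) y := by
    have := ((((hasDerivAt_id' y).sub_const x).add_const 1).mul (hasDerivAt_neg y).exp).neg
    exact this.congr_deriv (by ring)
  have hcont : Continuous fun y => (y - x) * exp (-y) := by fun_prop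
  rw [intervalIntegral.integral_eq_sub_of_hasDerivAt (fun y _ => hderiv y)
    (hcont.intervalIntegrable a b)]
  ring

theorem integral_sub_mul_exp_add (q r a b : ℝ) :
    ∫ x in a..b, (q - x + 1) * exp (x + r) =
      (q - b + 2) * exp (b + r) - (q - a + 2) * exp (a + r) := by
  have hderiv (x : ℝ) :
      HasDerivAt (fun x => (q - x + 2) * exp (x + r)) ((q - x + 1) * exp (x + r)) x := by
    have := (((hasDerivAt_id' x).const_sub q).add_const 2).mul ((hasDerivAt_id' x).add_const r).exp
    exact this.congr_deriv (by ring)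
  have hcont : Continuous fun x => (q - x + 1) * exp (x + r) := by fun_prop
  exact intervalIntegral.integral_eq_sub_of_hasDerivAt (fun x _ => hderiv x)
    (hcont.intervalIntegrable a b)

theorem setIntegral_Icc_exp_neg_mul_ite (x : ℝ) {a t : ℝ} (ha : 0 ≤ a) (hat : a ≤ t) :
    ∫ y in Icc 0 t, exp (-y) * (if a ≤ y then y - x else 0) =
      (a - x + 1) * exp (-a) - (t - x + 1) * exp (-t) := by
  have hind : (fun y => exp (-y) * (if a ≤ y then y - x else 0)) =
      (Ici a).indicator (fun y => (y - x) * exp (-y)) := by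
    ext y; by_cases hy : a ≤ y <;> simp [hy, mul_comm]
  rw [hind, setIntegral_indicator measurableSet_Ici, ← Ici_inter_Iic, inter_right_comm,
    Ici_inter_Ici, max_eq_right ha, Ici_inter_Iic,
    integral_Icc_eq_integral_Ioc, ← intervalIntegral.integral_of_le hat,
    integral_sub_mul_exp_neg]

theorem setIntegral_Icc_exp_mul_posPart (c : ℝ) {t : ℝ} (ht : 0 ≤ t) :
    ∫ x in Icc 0 t, c * exp (x - t) * ∫ y in Icc 0 t, c * exp (-y) * max (y - x) 0 =
      c ^ 2 * (exp (-t) * (t - 2 + (t + 2) * exp (-t))) := by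
  have hinner : ∀ x ∈ Icc 0 t,
      c * exp (x - t) * ∫ y in Icc 0 t, c * exp (-y) * max (y - x) 0 =
        c ^ 2 * (exp (-t) - (t - x + 1) * exp (x + (-t - t))) := by
    intro x hx
    have hmax (y : ℝ) : max (y - x) 0 = if x ≤ y then y - x else 0 := by
      split_ifs with h
      · exact max_eq_left (sub_nonneg.2 h)
      · exact max_eq_right (by linarith [not_le.1 h])
    simp_rw [mul_assoc c, integral_const_mul, hmax, setIntegral_Icc_exp_neg_mul_ite x hx.1 hx.2]
    simp only [exp_add, exp_sub, exp_neg]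
    field_simp
    ring
  have hcont : Continuous fun x => (t - x + 1) * exp (x + (-t - t)) := by fun_prop
  rw [setIntegral_congr_fun measurableSet_Icc hinner, integral_const_mul,
    integral_Icc_eq_integral_Ioc, ← intervalIntegral.integral_of_le ht,
    intervalIntegral.integral_sub intervalIntegrable_const (hcont.intervalIntegrable 0 t),
    intervalIntegral.integral_const, integral_sub_mul_exp_add]
  simp only [exp_add, exp_sub, exp_neg, exp_zero, smul_eq_mul]
  field_simp
  ring

theorem setIntegral_Icc_exp_mul_fixedPriceGain (c : ℝ) {p t : ℝ} (hp : 0 ≤ p) (hpt : p ≤ t) :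
    ∫ x in Icc 0 t, c * exp (x - t) *
        ∫ y in Icc 0 t, c * exp (-y) * fixedPriceGain p x y =
      c ^ 2 * (exp (-t) *
        (2 + (t + 2) * exp (-t) - (p + 2) * exp (-p) - (t - p + 2) * exp (p - t))) := by
  have hinner : ∀ x ∈ Icc 0 t,
      c * exp (x - t) *
          ∫ y in Icc 0 t, c * exp (-y) * fixedPriceGain p x y =
        (Iic p).indicator (fun x => c ^ 2 *
          ((p - x + 1) * exp (x + (-t - p)) - (t - x + 1) * exp (x + (-t - t)))) x := by
    intro x hx
    by_cases hxp : x ≤ p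
    · have hite (y : ℝ) : fixedPriceGain p x y = if p ≤ y then y - x else 0 := by
        simp [fixedPriceGain, hxp]
      simp_rw [hite, mul_assoc c, integral_const_mul, setIntegral_Icc_exp_neg_mul_ite x hp hpt,
        indicator_of_mem (mem_Iic.2 hxp)]
      simp only [exp_add, exp_sub, exp_neg]
      field_simp
    · simp [fixedPriceGain, hxp]
  have hcont₁ : Continuous fun x => (p - x + 1) * exp (x + (-t - p)) := by fun_prop
  have hcont₂ : Continuous fun x => (t - x + 1) * exp (x + (-t - t)) := by fun_prop
  rw [setIntegral_congr_fun measurableSet_Icc hinner, setIntegral_indicator measurableSet_Iic,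
    ← Ici_inter_Iic, inter_assoc, Iic_inter_Iic, min_eq_right hpt, Ici_inter_Iic,
    integral_const_mul, integral_Icc_eq_integral_Ioc, ← intervalIntegral.integral_of_le hp,
    intervalIntegral.integral_sub (hcont₁.intervalIntegrable 0 p) (hcont₂.intervalIntegrable 0 p),
    integral_sub_mul_exp_add, integral_sub_mul_exp_add]
  simp only [exp_add, exp_sub, exp_neg, exp_zero]
  field_simp
  ring

theorem setIntegral_Icc_exp_mul_fixedPriceGain_of_notMem (c : ℝ) {p t : ℝ} (hp : p ∉ Icc 0 t) :
    ∫ x in Icc 0 t, c * exp (x - t) *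
        ∫ y in Icc 0 t, c * exp (-y) * fixedPriceGain p x y = 0 := by
  refine setIntegral_eq_zero_of_forall_eq_zero fun x hx => ?_
  rw [setIntegral_eq_zero_of_forall_eq_zero fun y hy => ?_, mul_zero]
  rw [fixedPriceGain, if_neg fun h => hp ⟨hx.1.trans h.1, h.2.trans hy.2⟩, mul_zero, mul_zero]

/-- **No fixed price gives a constant approximation to the gain from trade.**
Let `t > 2`, `λ = 1/(1 − e^{−t})`, and let `s, b` be independent with
densities `λ e^{x−t}` and `λ e^{−x}` on `[0, t]`. Then for every price `p`,
the gain from trade of the fixed-price mechanism is at most a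
`(2 + (t+2)e^{−t}) / (t − 2 + (t+2)e^{−t})` (i.e. `O(1/t)`) fraction of the
optimal gain from trade `E[(b − s)⁺]`. -/
theorem fixed_price_gft_not_constant_approx
    {Ω : Type*} [MeasurableSpace Ω] {P : Measure Ω} [IsProbabilityMeasure P]
    (t : ℝ) (ht : 2 < t)
    (s b : Ω → ℝ) (hsm : Measurable s) (hbm : Measurable b)
    (hindep : IndepFun s b P)
    (hslaw : P.map s = (volume.restrict (Set.Icc (0:ℝ) t)).withDensity
        (fun x => ENNReal.ofReal ((1 - Real.exp (-t))⁻¹ * Real.exp (x - t))))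
    (hblaw : P.map b = (volume.restrict (Set.Icc (0:ℝ) t)).withDensity
        (fun x => ENNReal.ofReal ((1 - Real.exp (-t))⁻¹ * Real.exp (-x))))
    (p : ℝ) :
    ∫ ω, (b ω - s ω) * (if s ω ≤ p ∧ p ≤ b ω then (1:ℝ) else 0) ∂P
      ≤ ((2 + (t + 2) * Real.exp (-t)) / (t - 2 + (t + 2) * Real.exp (-t))) *
          ∫ ω, max (b ω - s ω) 0 ∂P := by
  set c := (1 - exp (-t))⁻¹
  have hc : 0 ≤ c := inv_nonneg.2 (sub_nonneg.2 (exp_le_one_iff.2 (by linarith)))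
  have transfer := hindep.integral_comp_eq_setIntegral_density hsm hbm measurableSet_Icc
    measurableSet_Icc (by fun_prop) (by fun_prop) (fun _ => by positivity)
    (fun _ => by positivity) hslaw hblaw
  have hmax : Measurable (Function.uncurry fun x y : ℝ => max (y - x) 0) := by fun_prop
  change ∫ ω, fixedPriceGain p (s ω) (b ω) ∂P ≤ _
  rw [transfer _ (measurable_fixedPriceGain p) fun _ hx _ hy => abs_fixedPriceGain_le hx hy,
    transfer _ hmax (C := t) fun x hx y hy => by
      rw [abs_of_nonneg (le_max_right _ _)]
      exact max_le (by linarith [hx.1, hy.2]) (by linarith [hx.1, hx.2]),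
    setIntegral_Icc_exp_mul_posPart c (by linarith)]
  have hD : 0 < t - 2 + (t + 2) * exp (-t) := by nlinarith [exp_pos (-t)]
  rw [div_mul_comm, mul_comm, ← mul_assoc, mul_div_cancel_right₀ _ hD.ne']
  by_cases hp : p ∈ Icc 0 t
  · obtain ⟨hp0, hpt⟩ := hp
    have hloss : 0 ≤ (p + 2) * exp (-p) + (t - p + 2) * exp (p - t) := by positivity
    rw [setIntegral_Icc_exp_mul_fixedPriceGain c hp0 hpt]
    nlinarith [mul_nonneg (by positivity : 0 ≤ c ^ 2 * exp (-t)) hloss]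
  · rw [setIntegral_Icc_exp_mul_fixedPriceGain_of_notMem c hp]
    positivity
end

section
/- Let b > 0 and let s be a random variable with 0 ≤ s ≤ b almost surely. Let q : [1/e, 1] → ℝ be a measurable function with q(x) ≤ b, P(s ≤ q(x)) = x, and P(s < q(x)) = x for every x ∈ [1/e, 1], and let X be a random variable on [1/e, 1] with probability density g(x) = 1/x, independent of s. Then E[b·𝟙{s ≤ q(X)} + s·𝟙{s > q(X)}] ≥ (1 − 1/e)·b. -/
/-!
Trade happens iff `s ≤ q X`, and then the welfare is `b`; otherwise it is `s ≥ 0`. So the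
expected welfare is at least `b · P(s ≤ q X)`. By independence, `P(s ≤ q X)` is the mean of
`x ↦ P(s ≤ q x) = x` under the law of `X`, and against the density `1/x` on `[1/e, 1]` that mean
is the length `1 - 1/e` of the interval.
-/

open MeasureTheory ProbabilityTheory

lemma ProbabilityTheory.IndepFun.measure_le_comp_eq_lintegral_map {Ω : Type*}
    [MeasurableSpace Ω] {P : Measure Ω} [IsFiniteMeasure P] {s X : Ω → ℝ} (hs : Measurable s) (hX : Measurable X)
    (hindep : IndepFun s X P) {q : ℝ → ℝ} (hq : Measurable q) :
    P {ω | s ω ≤ q (X ω)} = ∫⁻ y, P {ω | s ω ≤ q y} ∂P.map X := by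
  have hS : MeasurableSet {p : ℝ × ℝ | p.1 ≤ q p.2} :=
    measurableSet_le measurable_fst (hq.comp measurable_snd)
  have hsection (y : ℝ) :
      P.map s ((fun x => (x, y)) ⁻¹' {p : ℝ × ℝ | p.1 ≤ q p.2}) = P {ω | s ω ≤ q y} :=
    Measure.map_apply hs (measurableSet_Iic (a := q y))
  calc P {ω | s ω ≤ q (X ω)} = P.map (fun ω => (s ω, X ω)) {p : ℝ × ℝ | p.1 ≤ q p.2} :=
        (Measure.map_apply (hs.prodMk hX) hS).symm
    _ = ∫⁻ y, P {ω | s ω ≤ q y} ∂P.map X := by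
        rw [hindep.map_prod_eq_prod_map_map hs.aemeasurable hX.aemeasurable,
          Measure.prod_apply_symm hS]
        simp only [hsection]

lemma lintegral_withDensity_inv_of_eqOn_ofReal {a c : ℝ} (ha : 0 < a) {f : ℝ → ENNReal}
    (hf : Set.EqOn f ENNReal.ofReal (Set.Icc a c)) :
    ∫⁻ y, f y ∂(volume.restrict (Set.Icc a c)).withDensity (fun x => ENNReal.ofReal x⁻¹)
      = ENNReal.ofReal (c - a) := by
  rw [lintegral_withDensity_eq_lintegral_mul_non_measurable _ measurable_inv.ennreal_ofReal
    (.of_forall fun _ => ENNReal.ofReal_lt_top)]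
  calc ∫⁻ y in Set.Icc a c, ENNReal.ofReal y⁻¹ * f y
      = ∫⁻ _ in Set.Icc a c, 1 := by
        refine setLIntegral_congr_fun measurableSet_Icc fun y hy => ?_
        have hy : 0 < y := ha.trans_le hy.1
        rw [hf ‹_›, ← ENNReal.ofReal_mul (inv_nonneg.2 hy.le), inv_mul_cancel₀ hy.ne',
          ENNReal.ofReal_one]
    _ = ENNReal.ofReal (c - a) := by simp [Real.volume_Icc]

lemma mul_measureReal_le_integral_welfare {Ω : Type*} [MeasurableSpace Ω] {P : Measure Ω}
    [IsFiniteMeasure P] {b : ℝ} {s t : Ω → ℝ} (hs : Measurable s) (ht : Measurable t)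
    (hs_range : ∀ᵐ ω ∂P, 0 ≤ s ω ∧ s ω ≤ b) :
    b * P.real {ω | s ω ≤ t ω}
      ≤ ∫ ω, (b * (if s ω ≤ t ω then (1:ℝ) else 0)
              + s ω * (if t ω < s ω then (1:ℝ) else 0)) ∂P := by
  have htrade : MeasurableSet {ω | s ω ≤ t ω} := measurableSet_le hs ht
  have hwelfare (ω : Ω) : b * (if s ω ≤ t ω then (1:ℝ) else 0)
      + s ω * (if t ω < s ω then (1:ℝ) else 0) = if s ω ≤ t ω then b else s ω := by
    by_cases h : s ω ≤ t ω
    · simp [h, not_lt.2 h]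
    · simp [h, lt_of_not_ge h]
  simp only [hwelfare]
  have hint : Integrable (fun ω => if s ω ≤ t ω then b else s ω) P := by
    refine .of_bound (Measurable.ite htrade measurable_const hs).aestronglyMeasurable |b| ?_
    filter_upwards [hs_range] with ω ⟨hs0, hsb⟩
    split_ifs
    · exact le_rfl
    · rw [Real.norm_eq_abs, abs_of_nonneg hs0]; exact hsb.trans (le_abs_self b)
  calc b * P.real {ω | s ω ≤ t ω} = ∫ ω, {ω | s ω ≤ t ω}.indicator (fun _ => b) ω ∂P := by
        rw [integral_indicator_const b htrade, smul_eq_mul, mul_comm]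
    _ ≤ ∫ ω, (if s ω ≤ t ω then b else s ω) ∂P := by
        refine integral_mono_ae ((integrable_const b).indicator htrade) hint ?_
        filter_upwards [hs_range] with ω ⟨hs0, _⟩
        by_cases h : s ω ≤ t ω
        · simp [h]
        · simp [h, hs0]

theorem random_quantile_core_general
    {Ω : Type*} [MeasurableSpace Ω] {P : Measure Ω} [IsProbabilityMeasure P]
    (b : ℝ)
    (s X : Ω → ℝ) (hsm : Measurable s) (hXm : Measurable X)
    (hs_range : ∀ᵐ ω ∂P, 0 ≤ s ω ∧ s ω ≤ b)
    (q : ℝ → ℝ) (hqm : Measurable q)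
    (hq1 : ∀ x ∈ Set.Icc (Real.exp 1)⁻¹ 1, P {ω | s ω ≤ q x} = ENNReal.ofReal x)
    (hindep : IndepFun s X P)
    (hX_law : P.map X
        = (volume.restrict (Set.Icc (Real.exp 1)⁻¹ 1)).withDensity
            (fun x => ENNReal.ofReal x⁻¹)) :
    (1 - (Real.exp 1)⁻¹) * b
      ≤ ∫ ω, (b * (if s ω ≤ q (X ω) then (1:ℝ) else 0)
              + s ω * (if q (X ω) < s ω then (1:ℝ) else 0)) ∂P := by
  have hinv_le_one : (Real.exp 1)⁻¹ ≤ 1 := inv_le_one_of_one_le₀ (Real.one_le_exp zero_le_one)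
  have htrade : P {ω | s ω ≤ q (X ω)} = ENNReal.ofReal (1 - (Real.exp 1)⁻¹) := by
    rw [hindep.measure_le_comp_eq_lintegral_map hsm hXm hqm, hX_law]
    exact lintegral_withDensity_inv_of_eqOn_ofReal (inv_pos.2 (Real.exp_pos 1)) hq1
  calc (1 - (Real.exp 1)⁻¹) * b = b * P.real {ω | s ω ≤ q (X ω)} := by
        rw [measureReal_def, htrade, ENNReal.toReal_ofReal (by linarith), mul_comm]
    _ ≤ _ := mul_measureReal_le_integral_welfare hsm (hqm.comp hXm) hs_range

/-- **Core computation of the Random-Quantile mechanism (truncated seller).**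
Let `b > 0` and let `s` satisfy `0 ≤ s ≤ b` almost surely. Let `q` be a
quantile function of `s` on `[1/e, 1]` with `q(x) ≤ b` there, and let `X` be
a random variable with density `1/x` on `[1/e, 1]`, independent of `s`. Then
`E[b·𝟙{s ≤ q(X)} + s·𝟙{s > q(X)}] ≥ (1 − 1/e)·b`. -/
theorem random_quantile_core
    {Ω : Type*} [MeasurableSpace Ω] {P : Measure Ω} [IsProbabilityMeasure P]
    (b : ℝ) (hb : 0 < b)
    (s X : Ω → ℝ) (hsm : Measurable s) (hXm : Measurable X)
    (hs_range : ∀ᵐ ω ∂P, 0 ≤ s ω ∧ s ω ≤ b)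
    (q : ℝ → ℝ) (hqm : Measurable q)
    (hqb : ∀ x ∈ Set.Icc (Real.exp 1)⁻¹ 1, q x ≤ b)
    (hq1 : ∀ x ∈ Set.Icc (Real.exp 1)⁻¹ 1, P {ω | s ω ≤ q x} = ENNReal.ofReal x)
    (hq2 : ∀ x ∈ Set.Icc (Real.exp 1)⁻¹ 1, P {ω | s ω < q x} = ENNReal.ofReal x)
    (hindep : IndepFun s X P)
    (hX_law : P.map X
        = (volume.restrict (Set.Icc (Real.exp 1)⁻¹ 1)).withDensity
            (fun x => ENNReal.ofReal x⁻¹)) :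
    (1 - (Real.exp 1)⁻¹) * b
      ≤ ∫ ω, (b * (if s ω ≤ q (X ω) then (1:ℝ) else 0)
              + s ω * (if q (X ω) < s ω then (1:ℝ) else 0)) ∂P :=
  random_quantile_core_general b s X hsm hXm hs_range q hqm hq1 hindep hX_law
end
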